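/- Let G be a finite weighted graph with peeling sequence H_n ⊇ H_{n−1} ⊇ … ⊇ H_1 produced by repeatedly removing a minimum-weighted-degree vertex. Then for every integer k with 1 ≤ k ≤ n, max_{i ≥ k} d(H_i) ≥ dal(G,k)/3, where dal(G,k) is the maximum density of an induced subgraph of G on at least k vertices. (That is, the greedy algorithm ChALK is a 3-approximation for the densest at-least-k-subgraph problem.) -/

import Mathlib

/-! Let `D` be the largest density among `H k, …, H n`. A minimum-degree vertex of `H i` has
degree at most `2 d(H i) ≤ 2 D`, so deleting it never decreases the potential
`W(S ∩ H i) - 2 D |S ∩ H i|`. Peeling from `H n ⊇ S` down to `H k` therefore gives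
`W(S) - 2 D |S| ≤ W(H k) ≤ D k ≤ D |S|`, i.e. `d(S) ≤ 3 D`. -/

open Finset

variable {V : Type*} [Fintype V] [DecidableEq V]

/-- Weighted degree of vertex `v` in the subgraph induced on `S`. -/
def wDeg (w : V → V → ℝ) (S : Finset V) (v : V) : ℝ := ∑ u ∈ S, w v u

/-- Total edge weight of the subgraph induced on `S`. -/
noncomputable def wTot (w : V → V → ℝ) (S : Finset V) : ℝ :=
  (∑ u ∈ S, ∑ x ∈ S, w u x) / 2

/-- Density of the subgraph induced on `S`. -/
noncomputable def dens (w : V → V → ℝ) (S : Finset V) : ℝ := wTot w S / S.card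

section

omit [Fintype V] [DecidableEq V]

variable {w : V → V → ℝ}

lemma wTot_nonneg (hnn : ∀ u v, 0 ≤ w u v) (S : Finset V) : 0 ≤ wTot w S :=
  div_nonneg (sum_nonneg fun u _ => sum_nonneg fun x _ => hnn u x) zero_le_two

lemma dens_nonneg (hnn : ∀ u v, 0 ≤ w u v) (S : Finset V) : 0 ≤ dens w S :=
  div_nonneg (wTot_nonneg hnn S) (Nat.cast_nonneg _)

lemma wTot_mono (hnn : ∀ u v, 0 ≤ w u v) {A B : Finset V} (h : A ⊆ B) :
    wTot w A ≤ wTot w B := by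
  unfold wTot
  gcongr
  calc ∑ u ∈ A, ∑ x ∈ A, w u x
      ≤ ∑ u ∈ A, ∑ x ∈ B, w u x :=
        sum_le_sum fun u _ => sum_le_sum_of_subset_of_nonneg h fun x _ _ => hnn u x
    _ ≤ ∑ u ∈ B, ∑ x ∈ B, w u x :=
        sum_le_sum_of_subset_of_nonneg h fun u _ _ => sum_nonneg fun x _ => hnn u x

lemma wTot_eq_dens_mul_card (S : Finset V) : wTot w S = dens w S * #S := by
  rcases S.eq_empty_or_nonempty with rfl | hS
  · simp [wTot]
  · rw [_root_.dens, div_mul_cancel₀ _ (by exact_mod_cast hS.card_pos.ne')]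

lemma sum_wDeg (S : Finset V) : ∑ u ∈ S, wDeg w S u = 2 * wTot w S := by
  simp only [wDeg, wTot]
  ring

lemma le_two_mul_dens_of_le_wDeg {T : Finset V} (hT : T.Nonempty) {c : ℝ}
    (h : ∀ u ∈ T, c ≤ wDeg w T u) : c ≤ 2 * dens w T := by
  have hsum : c * #T ≤ 2 * dens w T * #T := by
    rw [mul_assoc, ← wTot_eq_dens_mul_card, ← sum_wDeg, mul_comm, ← nsmul_eq_mul, ← sum_const]
    exact sum_le_sum h
  exact le_of_mul_le_mul_right hsum (by exact_mod_cast hT.card_pos)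

end

section

omit [Fintype V]

variable {w : V → V → ℝ}

lemma wTot_erase (hsymm : ∀ u v, w u v = w v u) (hdiag : ∀ v, w v v = 0)
    {T : Finset V} {x : V} (hx : x ∈ T) :
    wTot w (T.erase x) = wTot w T - wDeg w T x := by
  unfold wTot wDeg
  rw [sum_congr rfl fun u _ => sum_erase_eq_sub (f := w u) hx, sum_sub_distrib,
    sum_erase_eq_sub hx, sum_erase_eq_sub hx, hdiag x,
    sum_congr rfl fun u _ => hsymm u x]
  ring

lemma wTot_sub_mul_card_inter_le_erase (hsymm : ∀ u v, w u v = w v u)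
    (hnn : ∀ u v, 0 ≤ w u v) (hdiag : ∀ v, w v v = 0) (S : Finset V) {T : Finset V}
    {x : V} (hx : x ∈ T) {c : ℝ} (hc : wDeg w T x ≤ c) :
    wTot w (S ∩ T) - c * #(S ∩ T) ≤ wTot w (S ∩ T.erase x) - c * #(S ∩ T.erase x) := by
  rw [inter_erase]
  by_cases hxS : x ∈ S
  · have hxST : x ∈ S ∩ T := mem_inter.mpr ⟨hxS, hx⟩
    have hdeg : wDeg w (S ∩ T) x ≤ wDeg w T x :=
      sum_le_sum_of_subset_of_nonneg inter_subset_right fun u _ _ => hnn x u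
    rw [wTot_erase hsymm hdiag hxST, card_erase_of_mem hxST,
      Nat.cast_sub (card_pos.mpr ⟨x, hxST⟩), Nat.cast_one]
    linarith
  · rw [erase_eq_of_notMem fun h => hxS (mem_inter.mp h).1]

structure IsPeeling (w : V → V → ℝ) (H : ℕ → Finset V) (v : ℕ → V) (n : ℕ) : Prop where
  mem : ∀ i, 1 ≤ i → i ≤ n → v i ∈ H i
  wDeg_le : ∀ i, 1 ≤ i → i ≤ n → ∀ u ∈ H i, wDeg w (H i) (v i) ≤ wDeg w (H i) u
  erase : ∀ i, 1 ≤ i → i ≤ n → H (i - 1) = (H i).erase (v i)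

namespace IsPeeling

variable {w : V → V → ℝ} {H : ℕ → Finset V} {v : ℕ → V} {n : ℕ}

lemma card_eq (hP : IsPeeling w H v n) (hn : #(H n) = n) {i : ℕ} (hi : i ≤ n) :
    #(H i) = i := by
  induction hi using Nat.decreasingInduction with
  | self => exact hn
  | of_succ j hj ih =>
    have hH := hP.erase (j + 1) (by omega) hj
    rw [Nat.add_sub_cancel] at hH
    rw [hH, card_erase_of_mem (hP.mem (j + 1) (by omega) hj), ih, Nat.add_sub_cancel]

lemma wDeg_le_two_mul_dens (hP : IsPeeling w H v n) {i : ℕ} (h1 : 1 ≤ i) (hi : i ≤ n) :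
    wDeg w (H i) (v i) ≤ 2 * dens w (H i) :=
  le_two_mul_dens_of_le_wDeg ⟨v i, hP.mem i h1 hi⟩ (hP.wDeg_le i h1 hi)

lemma wTot_sub_mul_card_inter_le (hsymm : ∀ u v, w u v = w v u) (hnn : ∀ u v, 0 ≤ w u v)
    (hdiag : ∀ v, w v v = 0) (hP : IsPeeling w H v n) (S : Finset V) {k : ℕ} (hkn : k ≤ n)
    {c : ℝ} (hc : ∀ i, k < i → i ≤ n → wDeg w (H i) (v i) ≤ c) :
    wTot w (S ∩ H n) - c * #(S ∩ H n) ≤ wTot w (S ∩ H k) - c * #(S ∩ H k) := by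
  have hanti : AntitoneOn (fun i => wTot w (S ∩ H i) - c * #(S ∩ H i)) (Set.Icc k n) := by
    refine antitoneOn_of_le_sub_one Set.ordConnected_Icc fun i hmin ⟨_, hin⟩ ⟨hki, _⟩ => ?_
    have hi0 : i ≠ 0 := by
      rintro rfl
      exact hmin isMin_bot
    rw [hP.erase i (by omega) hin]
    exact wTot_sub_mul_card_inter_le_erase hsymm hnn hdiag S (hP.mem i (by omega) hin)
      (hc i (by omega) hin)
  exact hanti (Set.left_mem_Icc.mpr hkn) (Set.right_mem_Icc.mpr hkn) hkn

theorem dens_le_three_mul (hsymm : ∀ u v, w u v = w v u) (hnn : ∀ u v, 0 ≤ w u v)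
    (hdiag : ∀ v, w v v = 0) (hP : IsPeeling w H v n) {k : ℕ} (hkn : k ≤ n) {D : ℝ}
    (hD : ∀ i, k ≤ i → i ≤ n → dens w (H i) ≤ D) {S : Finset V} (hS : S ⊆ H n)
    (hSk : #(H k) ≤ #S) : dens w S ≤ 3 * D := by
  have hD0 : 0 ≤ D := (dens_nonneg hnn _).trans (hD k le_rfl hkn)
  have hpot := hP.wTot_sub_mul_card_inter_le hsymm hnn hdiag S hkn (c := 2 * D)
    fun i hki hi => (hP.wDeg_le_two_mul_dens (by omega) hi).trans (by linarith [hD i hki.le hi])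
  rw [inter_eq_left.mpr hS] at hpot
  have hHk : wTot w (H k) ≤ D * #S := by
    rw [wTot_eq_dens_mul_card]
    exact mul_le_mul (hD k le_rfl hkn) (by exact_mod_cast hSk) (Nat.cast_nonneg _) hD0
  have hW : wTot w S ≤ 3 * D * #S := by
    have hmono := wTot_mono hnn (inter_subset_right : S ∩ H k ⊆ H k)
    have hcard : 0 ≤ 2 * D * #(S ∩ H k) := by positivity
    linarith
  exact div_le_of_le_mul₀ (Nat.cast_nonneg _) (by positivity) hW

end IsPeeling

end

theorem stmt7_general (w : V → V → ℝ) (hsymm : ∀ u v, w u v = w v u)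
    (hnn : ∀ u v, 0 ≤ w u v) (hdiag : ∀ v, w v v = 0)
    (H : ℕ → Finset V) (v : ℕ → V) (r : ℕ → ℝ)
    (hHn : H (Fintype.card V) = Finset.univ)
    (hpeel : ∀ i, 1 ≤ i → i ≤ Fintype.card V →
      v i ∈ H i ∧ r i = wDeg w (H i) (v i) ∧
      (∀ u ∈ H i, r i ≤ wDeg w (H i) u) ∧ H (i - 1) = (H i).erase (v i))
    (k : ℕ) (hkn : k ≤ Fintype.card V) :
    ∀ S : Finset V, k ≤ S.card →
      ∃ i, k ≤ i ∧ i ≤ Fintype.card V ∧ dens w S / 3 ≤ dens w (H i) := by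
  intro S hS
  have hP : IsPeeling w H v (Fintype.card V) :=
    { mem := fun i h1 hi => (hpeel i h1 hi).1
      wDeg_le := fun i h1 hi => (hpeel i h1 hi).2.1 ▸ (hpeel i h1 hi).2.2.1
      erase := fun i h1 hi => (hpeel i h1 hi).2.2.2 }
  obtain ⟨i, hi, hmax⟩ :=
    (Icc k (Fintype.card V)).exists_max_image (fun i => dens w (H i)) (nonempty_Icc.mpr hkn)
  obtain ⟨hki, hin⟩ := mem_Icc.mp hi
  have hHk : #(H k) ≤ #S := by
    rwa [hP.card_eq (by rw [hHn, card_univ]) hkn]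
  have h3 := hP.dens_le_three_mul hsymm hnn hdiag hkn
    (fun j hkj hjn => hmax j (mem_Icc.mpr ⟨hkj, hjn⟩)) (hHn ▸ subset_univ S) hHk
  exact ⟨i, hki, hin, by linarith⟩

/-- ChALK is a 3-approximation for the densest
at-least-k-subgraph problem: some H_i with i ≥ k has density ≥ dal(G,k)/3. -/
theorem stmt7 (w : V → V → ℝ) (hsymm : ∀ u v, w u v = w v u)
    (hnn : ∀ u v, 0 ≤ w u v) (hdiag : ∀ v, w v v = 0)
    (H : ℕ → Finset V) (v : ℕ → V) (r : ℕ → ℝ)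
    (hHn : H (Fintype.card V) = Finset.univ)
    (hpeel : ∀ i, 1 ≤ i → i ≤ Fintype.card V →
      v i ∈ H i ∧ r i = wDeg w (H i) (v i) ∧
      (∀ u ∈ H i, r i ≤ wDeg w (H i) u) ∧ H (i - 1) = (H i).erase (v i))
    (k : ℕ) (hk : 1 ≤ k) (hkn : k ≤ Fintype.card V) :
    ∀ S : Finset V, k ≤ S.card →
      ∃ i, k ≤ i ∧ i ≤ Fintype.card V ∧ dens w S / 3 ≤ dens w (H i) :=
  stmt7_general w hsymm hnn hdiag H v r hHn hpeel k hkn
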